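/- arXiv:2012.11814 — 2 statements merged into one kernel-verified Lean document; each statement's English description precedes it below -/
import Mathlib

section
/- Any closed spherical curve of length less than 2π lies in an open hemisphere of S². -/
/-!
Split the curve at a point `γ s` halving its length, so that both arcs are shorter than `π`, and
take `z` along `γ 0 + γ s`. Since angle and chord agree to first order, the angle between two
points of an arc is at most the arc's length. A point `x` with `⟪x, z⟫ = 0` satisfies
`∠(x, γ s) = ∠(-x, γ 0)`, so an arc from `γ 0` to `γ s` through `x` would have length at least
`∠(x, γ 0) + ∠(γ 0, -x) ≥ ∠(x, -x) = π`. Hence `⟪·, z⟫` never vanishes on the curve, and it is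
positive at `γ 0`.
-/

open Set Filter Topology Real InnerProductGeometry
open scoped ENNReal RealInnerProductSpace

theorem LocallyBoundedVariationOn.continuousOn_variationOnFromTo {α E : Type*} [LinearOrder α]
    [TopologicalSpace α] [OrderTopology α] [PseudoMetricSpace E] {f : α → E} {s : Set α}
    (hf : LocallyBoundedVariationOn f s) (hc : ContinuousOn f s) {a : α} (ha : a ∈ s) :
    ContinuousOn (variationOnFromTo f s a) s := by
  intro b hb
  have hs : s \ {b} = (s ∩ Iio b) ∪ (s ∩ Ioi b) := by
    ext x
    simp only [Set.mem_sdiff, mem_singleton_iff, mem_union, mem_inter_iff, mem_Iio, mem_Ioi,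
      ← and_or_left, ← ne_iff_lt_or_gt]
  rw [← continuousWithinAt_sdiff_self, ContinuousWithinAt, hs, nhdsWithin_union, tendsto_sup]
  constructor
  · simpa using variationOnFromTo.tendsto_left ha hb hf ((hc b hb).mono inter_subset_left)
  · simpa using variationOnFromTo.tendsto_right ha hb hf ((hc b hb).mono inter_subset_left)

theorem eVariationOn.Icc_add_Icc' {E : Type*} [PseudoEMetricSpace E] (f : ℝ → E) {a b c : ℝ}
    (hab : a ≤ b) (hbc : b ≤ c) :
    eVariationOn f (Icc a b) + eVariationOn f (Icc b c) = eVariationOn f (Icc a c) := by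
  simpa using eVariationOn.Icc_add_Icc f (s := univ) hab hbc (mem_univ b)

theorem exists_eVariationOn_Icc_eq_half {E : Type*} [PseudoMetricSpace E] {f : ℝ → E}
    {a b : ℝ} (hab : a ≤ b) (hf : ContinuousOn f (Icc a b))
    (hfin : eVariationOn f (Icc a b) ≠ ∞) :
    ∃ s ∈ Icc a b, eVariationOn f (Icc a s) = eVariationOn f (Icc a b) / 2 ∧
      eVariationOn f (Icc s b) = eVariationOn f (Icc a b) / 2 := by
  set L := eVariationOn f (Icc a b)
  have hbv : LocallyBoundedVariationOn f (Icc a b) :=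
    BoundedVariationOn.locallyBoundedVariationOn hfin
  have hvar : ∀ t ∈ Icc a b,
      variationOnFromTo f (Icc a b) a t = (eVariationOn f (Icc a t)).toReal := fun t ht ↦ by
    rw [variationOnFromTo.eq_of_le _ _ ht.1, Icc_inter_Icc, max_self, min_eq_right ht.2]
  obtain ⟨s, hs, hφs⟩ : L.toReal / 2 ∈ variationOnFromTo f (Icc a b) a '' Icc a b := by
    refine intermediate_value_Icc hab
      (hbv.continuousOn_variationOnFromTo hf (left_mem_Icc.2 hab)) ?_
    rw [hvar a (left_mem_Icc.2 hab), hvar b (right_mem_Icc.2 hab), Icc_self,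
      eVariationOn.subsingleton f subsingleton_singleton]
    exact ⟨by rw [ENNReal.toReal_zero]; positivity, half_le_self ENNReal.toReal_nonneg⟩
  have hleft : eVariationOn f (Icc a s) = L / 2 := by
    have hfin' : eVariationOn f (Icc a s) ≠ ∞ :=
      ne_top_of_le_ne_top hfin (eVariationOn.mono f (Icc_subset_Icc le_rfl hs.2))
    rwa [hvar s hs, ← ENNReal.toReal_ofNat 2, ← ENNReal.toReal_div,
      ENNReal.toReal_eq_toReal_iff' hfin' (ENNReal.div_ne_top hfin two_ne_zero)] at hφs
  refine ⟨s, hs, hleft, ?_⟩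
  have hadd := eVariationOn.Icc_add_Icc' f hs.1 hs.2
  rw [hleft] at hadd
  exact (ENNReal.add_right_inj (ENNReal.div_ne_top hfin two_ne_zero)).1
    (hadd.trans (ENNReal.add_halves L).symm)

theorem le_mul_eVariationOn_of_locally_le {E : Type*} [PseudoEMetricSpace E] {f : ℝ → E}
    {D : ℝ → ℝ → ℝ≥0∞} {C : ℝ≥0∞} {a b η : ℝ} (hab : a ≤ b) (hη : 0 < η)
    (htri : ∀ u v w, a ≤ u → u ≤ v → v ≤ w → w ≤ b → D u w ≤ D u v + D v w)
    (hloc : ∀ u v, a ≤ u → u ≤ v → v ≤ b → v - u < η → D u v ≤ C * edist (f u) (f v)) :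
    D a b ≤ C * eVariationOn f (Icc a b) := by
  have hlocV : ∀ u v, a ≤ u → u ≤ v → v ≤ b → v - u < η →
      D u v ≤ C * eVariationOn f (Icc u v) := fun u v hu huv hv h ↦
    (hloc u v hu huv hv h).trans (mul_le_mul_right
      (eVariationOn.edist_le f (left_mem_Icc.2 huv) (right_mem_Icc.2 huv)) C)
  have hsteps : ∀ n : ℕ, ∀ u v, a ≤ u → u ≤ v → v ≤ b → v - u ≤ n * (η / 2) →
      D u v ≤ C * eVariationOn f (Icc u v) := by
    intro n
    induction n with
    | zero => exact fun u v hu huv hv h ↦ hlocV u v hu huv hv (by simp at h; linarith)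
    | succ n ih =>
      intro u v hu huv hv h
      set w := max u (v - η / 2)
      have huw : u ≤ w := le_max_left _ _
      have hwv : w ≤ v := max_le huv (by linarith)
      calc D u v ≤ D u w + D w v := htri u w v hu huw hwv hv
        _ ≤ C * eVariationOn f (Icc u w) + C * eVariationOn f (Icc w v) := by
          gcongr
          · refine ih u w hu huw (hwv.trans hv) (sub_le_iff_le_add.2 (max_le ?_ ?_))
            · exact le_add_of_nonneg_left (by positivity)
            · push_cast at h
              linarith
          · exact hlocV w v (hu.trans huw) hwv hv (by linarith [le_max_right u (v - η / 2)])
        _ = C * eVariationOn f (Icc u v) := by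
          rw [← mul_add, eVariationOn.Icc_add_Icc' f huw hwv]
  obtain ⟨n, hn⟩ := exists_nat_ge ((b - a) / (η / 2))
  exact hsteps n a b le_rfl hab le_rfl ((div_le_iff₀ (by positivity)).1 hn)

theorem eventually_arcsin_lt_mul {K : ℝ} (hK : 1 < K) : ∀ᶠ s in 𝓝[>] 0, arcsin s < K * s := by
  have hslope : Tendsto (fun s ↦ s⁻¹ * arcsin s) (𝓝[≠] 0) (𝓝 1) := by
    simpa using hasDerivAt_iff_tendsto_slope_zero.1
      (hasDerivAt_arcsin (by norm_num : (0 : ℝ) ≠ -1) (by norm_num : (0 : ℝ) ≠ 1))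
  filter_upwards [(hslope.mono_left (nhdsWithin_mono _ fun s hs ↦ ne_of_gt hs)).eventually_lt_const
    hK, self_mem_nhdsWithin] with s hs hpos
  rwa [inv_mul_lt_iff₀ hpos, mul_comm] at hs

section Sphere

variable {V : Type*} [NormedAddCommGroup V] [InnerProductSpace ℝ V]

theorem InnerProductGeometry.angle_eq_two_mul_arcsin {x y : V} (hx : ‖x‖ = 1) (hy : ‖y‖ = 1) :
    angle x y = 2 * arcsin (‖x - y‖ / 2) := by
  set θ := angle x y
  have hθ : 0 ≤ θ / 2 ∧ θ / 2 ≤ π / 2 :=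
    ⟨by linarith [angle_nonneg x y], by linarith [angle_le_pi x y]⟩
  have hchord : ‖x - y‖ = 2 * sin (θ / 2) := by
    have hsq := norm_sub_sq_eq_norm_sq_add_norm_sq_sub_two_mul_norm_mul_norm_mul_cos_angle x y
    have hsin := sin_nonneg_of_nonneg_of_le_pi hθ.1 (by linarith)
    rw [hx, hy] at hsq
    rw [← sq_eq_sq₀ (norm_nonneg _) (by positivity), sq, hsq, mul_pow, sin_sq_eq_half_sub,
      mul_div_cancel₀ _ two_ne_zero]
    ring
  rw [hchord, mul_div_cancel_left₀ _ two_ne_zero, arcsin_sin (by linarith) hθ.2]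
  ring

theorem InnerProductGeometry.exists_angle_le_mul_norm_sub {K : ℝ} (hK : 1 < K) :
    ∃ δ > 0, ∀ x y : V, ‖x‖ = 1 → ‖y‖ = 1 → ‖x - y‖ < δ → angle x y ≤ K * ‖x - y‖ := by
  obtain ⟨ε, hε, hsub⟩ := mem_nhdsGT_iff_exists_Ioo_subset.1 (eventually_arcsin_lt_mul hK)
  refine ⟨2 * ε, mul_pos two_pos hε, fun x y hx hy hxy ↦ ?_⟩
  rcases (norm_nonneg (x - y)).eq_or_lt with h0 | hpos
  · have hy0 : y ≠ 0 := norm_ne_zero_iff.1 (by rw [hy]; exact one_ne_zero)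
    rw [← h0, sub_eq_zero.1 (norm_eq_zero.1 h0.symm), angle_self hy0, mul_zero]
  · have : arcsin (‖x - y‖ / 2) < K * (‖x - y‖ / 2) := hsub ⟨half_pos hpos, by linarith⟩
    rw [angle_eq_two_mul_arcsin hx hy]
    linarith

theorem ofReal_angle_le_eVariationOn {γ : ℝ → V} {a b : ℝ} (hab : a ≤ b)
    (hγ : ContinuousOn γ (Icc a b)) (hsph : ∀ t ∈ Icc a b, ‖γ t‖ = 1) :
    ENNReal.ofReal (angle (γ a) (γ b)) ≤ eVariationOn γ (Icc a b) := by
  have hK : ∀ K : ℝ, 1 < K →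
      ENNReal.ofReal (angle (γ a) (γ b)) ≤ ENNReal.ofReal K * eVariationOn γ (Icc a b) := by
    intro K hK
    obtain ⟨δ, hδ, hangle⟩ := exists_angle_le_mul_norm_sub (V := V) hK
    obtain ⟨η, hη, hUC⟩ := Metric.uniformContinuousOn_iff.1
      (isCompact_Icc.uniformContinuousOn_of_continuous hγ) δ hδ
    refine le_mul_eVariationOn_of_locally_le (f := γ)
      (D := fun u v ↦ ENNReal.ofReal (angle (γ u) (γ v))) hab hη
      (fun u v w _ _ _ _ ↦ ?_) (fun u v hu huv hv h ↦ ?_)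
    · rw [← ENNReal.ofReal_add (angle_nonneg _ _) (angle_nonneg _ _)]
      exact ENNReal.ofReal_le_ofReal (angle_le_angle_add_angle _ _ _)
    · have hu' : u ∈ Icc a b := ⟨hu, huv.trans hv⟩
      have hv' : v ∈ Icc a b := ⟨hu.trans huv, hv⟩
      have hclose : ‖γ u - γ v‖ < δ := by
        rw [← dist_eq_norm]
        exact hUC u hu' v hv' (by rw [Real.dist_eq, abs_sub_comm, abs_of_nonneg] <;> linarith)
      rw [edist_dist, ← ENNReal.ofReal_mul (by linarith), dist_eq_norm]
      exact ENNReal.ofReal_le_ofReal (hangle _ _ (hsph u hu') (hsph v hv') hclose)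
  have hlim : Tendsto (fun K : ℝ ↦ ENNReal.ofReal K * eVariationOn γ (Icc a b)) (𝓝[>] 1)
      (𝓝 (eVariationOn γ (Icc a b))) := by
    have hK1 : Tendsto ENNReal.ofReal (𝓝[>] 1) (𝓝 1) :=
      (ENNReal.continuous_ofReal.tendsto' 1 1 ENNReal.ofReal_one).mono_left nhdsWithin_le_nhds
    simpa using ENNReal.Tendsto.mul_const hK1 (Or.inl one_ne_zero)
  exact ge_of_tendsto hlim (eventually_nhdsWithin_of_forall hK)

theorem ofReal_angle_add_angle_le_eVariationOn {γ : ℝ → V} {u t v : ℝ} (hut : u ≤ t)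
    (htv : t ≤ v) (hγ : ContinuousOn γ (Icc u v)) (hsph : ∀ t ∈ Icc u v, ‖γ t‖ = 1) :
    ENNReal.ofReal (angle (γ u) (γ t) + angle (γ t) (γ v)) ≤ eVariationOn γ (Icc u v) := by
  rw [ENNReal.ofReal_add (angle_nonneg _ _) (angle_nonneg _ _),
    ← eVariationOn.Icc_add_Icc' γ hut htv]
  exact add_le_add
    (ofReal_angle_le_eVariationOn hut (hγ.mono (Icc_subset_Icc le_rfl htv))
      fun s hs ↦ hsph s (Icc_subset_Icc le_rfl htv hs))
    (ofReal_angle_le_eVariationOn htv (hγ.mono (Icc_subset_Icc hut le_rfl))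
      fun s hs ↦ hsph s (Icc_subset_Icc hut le_rfl hs))

theorem InnerProductGeometry.pi_le_angle_add_angle_of_inner_add_eq_zero {a b x : V}
    (hab : ‖a‖ = ‖b‖) (hx : x ≠ 0) (h : ⟪x, a + b⟫ = 0) : π ≤ angle a x + angle x b := by
  have hreflect : angle (-x) a = angle x b := by
    rw [inner_add_right, add_eq_zero_iff_eq_neg] at h
    rw [angle, angle, inner_neg_left, norm_neg, hab, h, neg_neg]
  calc π = angle x (-x) := (angle_self_neg_of_nonzero hx).symm
    _ ≤ angle x a + angle a (-x) := angle_le_angle_add_angle _ _ _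
    _ = angle a x + angle x b := by rw [angle_comm x a, angle_comm a (-x), hreflect]

theorem IsPreconnected.inner_add_pos_of_angle_add_angle_lt_pi {S : Set V}
    (hS : IsPreconnected S) (hS0 : (0 : V) ∉ S) {a b : V} (ha : a ∈ S) (hab : ‖a‖ = ‖b‖)
    (hlt : ∀ x ∈ S, angle a x + angle x b < π) : ∀ x ∈ S, 0 < ⟪x, a + b⟫ := by
  have hne : ∀ y ∈ S, ⟪y, a + b⟫ ≠ 0 := fun y hy h ↦ (hlt y hy).not_ge
    (pi_le_angle_add_angle_of_inner_add_eq_zero hab (ne_of_mem_of_not_mem hy hS0) h)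
  have ha_pos : 0 < ⟪a, a + b⟫ := by
    refine lt_of_le_of_ne ?_ (hne a ha).symm
    have hcs := neg_le_of_abs_le (abs_real_inner_le_norm a b)
    rw [← hab] at hcs
    rw [inner_add_right, real_inner_self_eq_norm_sq, sq]
    linarith
  intro x hx
  by_contra! hx_nonpos
  obtain ⟨y, hy, hy0⟩ := hS.intermediate_value hx ha
    (continuous_id.inner continuous_const).continuousOn ⟨hx_nonpos, ha_pos.le⟩
  exact hne y hy hy0

end Sphere

/-- Hemisphere lemma: any closed spherical curve of length less than `2π` lies in an open
hemisphere. -/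
theorem closed_spherical_curve_lt_two_pi_in_open_hemisphere
    (γ : ℝ → EuclideanSpace ℝ (Fin 3))
    (hcont : ContinuousOn γ (Set.Icc 0 1))
    (hsph : ∀ t ∈ Set.Icc (0:ℝ) 1, ‖γ t‖ = 1)
    (hclosed : γ 0 = γ 1)
    (hlen : eVariationOn γ (Set.Icc 0 1) < ENNReal.ofReal (2 * Real.pi)) :
    ∃ z : EuclideanSpace ℝ (Fin 3), ‖z‖ = 1 ∧
      ∀ t ∈ Set.Icc (0:ℝ) 1, 0 < (inner ℝ (γ t) z : ℝ) := by
  have h0 : (0 : ℝ) ∈ Icc 0 1 := left_mem_Icc.2 zero_le_one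
  obtain ⟨s, hs, hfirst, hsecond⟩ :=
    exists_eVariationOn_Icc_eq_half zero_le_one hcont (hlen.trans ENNReal.ofReal_lt_top).ne
  have hhalf : eVariationOn γ (Icc 0 1) / 2 < ENNReal.ofReal π := by
    rw [ENNReal.ofReal_mul zero_le_two, ENNReal.ofReal_ofNat, mul_comm] at hlen
    exact ENNReal.div_lt_of_lt_mul hlen
  have harc : ∀ x ∈ γ '' Icc 0 1, angle (γ 0) x + angle x (γ s) < π := by
    rintro _ ⟨t, ht, rfl⟩
    rw [← ENNReal.ofReal_lt_ofReal_iff pi_pos]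
    rcases le_total t s with hts | hst
    · refine (ofReal_angle_add_angle_le_eVariationOn ht.1 hts ?_ ?_).trans_lt (hfirst ▸ hhalf)
      exacts [hcont.mono (Icc_subset_Icc le_rfl hs.2), fun r hr ↦ hsph r ⟨hr.1, hr.2.trans hs.2⟩]
    · rw [hclosed, angle_comm, add_comm, angle_comm]
      refine (ofReal_angle_add_angle_le_eVariationOn hst ht.2 ?_ ?_).trans_lt (hsecond ▸ hhalf)
      exacts [hcont.mono (Icc_subset_Icc hs.1 le_rfl), fun r hr ↦ hsph r ⟨hs.1.trans hr.1, hr.2⟩]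
  have hpos := (isPreconnected_Icc.image γ hcont).inner_add_pos_of_angle_add_angle_lt_pi
    (fun ⟨t, ht, hγt⟩ ↦ by simpa [hγt] using hsph t ht) (mem_image_of_mem γ h0)
    (by rw [hsph 0 h0, hsph s hs]) harc
  have hne : γ 0 + γ s ≠ 0 := fun h ↦ by simpa [h] using hpos _ (mem_image_of_mem γ h0)
  refine ⟨‖γ 0 + γ s‖⁻¹ • (γ 0 + γ s), norm_smul_inv_norm hne, fun t ht ↦ ?_⟩
  rw [real_inner_smul_right]
  exact mul_pos (by positivity) (hpos _ (mem_image_of_mem γ ht))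
end

section
/- A smooth unit-speed plane curve with positive and strictly monotone signed curvature is simple (injective). -/
open Set intervalIntegral Topology Filter
open scoped RealInnerProductSpace

/-- Counterclockwise rotation of a plane vector by `π/2`. -/
noncomputable def rotCCW (v : EuclideanSpace ℝ (Fin 2)) : EuclideanSpace ℝ (Fin 2) :=
  (WithLp.toLp 2 (![-(v 1), v 0] : Fin 2 → ℝ) : EuclideanSpace ℝ (Fin 2))

noncomputable def rotL : EuclideanSpace ℝ (Fin 2) →L[ℝ] EuclideanSpace ℝ (Fin 2) :=
  LinearMap.toContinuousLinearMap
    { toFun := rotCCW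
      map_add' := by
        intro v w; ext i; fin_cases i <;>
          simp [rotCCW, PiLp.add_apply]; ring
      map_smul' := by
        intro c v; ext i; fin_cases i <;>
          simp [rotCCW, PiLp.smul_apply, mul_comm] }

lemma rotL_apply (v : EuclideanSpace ℝ (Fin 2)) : rotL v = rotCCW v := rfl

lemma rotL_rotL (v : EuclideanSpace ℝ (Fin 2)) : rotL (rotL v) = -v := by
  ext i; fin_cases i <;> simp [rotL_apply, rotCCW, PiLp.neg_apply]

lemma norm_rotL (v : EuclideanSpace ℝ (Fin 2)) : ‖rotL v‖ = ‖v‖ := by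
  rw [rotL_apply]
  simp only [EuclideanSpace.norm_eq, rotCCW]
  congr 1
  rw [Fin.sum_univ_two, Fin.sum_univ_two]
  simp
  ring

lemma key_lemma
    (I : Set ℝ) (hI : I.OrdConnected)
    (γ : ℝ → EuclideanSpace ℝ (Fin 2)) (k : ℝ → ℝ)
    (hγ : ContDiffOn ℝ (⊤ : ℕ∞) γ I)
    (hunit : ∀ s ∈ I, ‖derivWithin γ I s‖ = 1)
    (hcurv : ∀ s ∈ I,
      derivWithin (derivWithin γ I) I s = k s • rotCCW (derivWithin γ I s))
    (hpos : ∀ s ∈ I, 0 < k s)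
    (hmono : StrictMonoOn k I ∨ StrictAntiOn k I)
    {a b : ℝ} (ha : a ∈ I) (hb : b ∈ I) (hab : a < b) : γ a ≠ γ b := by
  intro hpq
  have hIcc : Icc a b ⊆ I := hI.out ha hb
  have hint : (interior I).Nonempty := by
    refine ⟨(a + b) / 2, interior_mono hIcc ?_⟩
    rw [interior_Icc]
    exact ⟨by linarith, by linarith⟩
  have hU : UniqueDiffOn ℝ I := uniqueDiffOn_convex (convex_iff_ordConnected.mpr hI) hint
  set T := derivWithin γ I with hTdef
  have hγd : DifferentiableOn ℝ γ I := hγ.differentiableOn (by simp)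
  have hTc : ContDiffOn ℝ (⊤ : ℕ∞) T I := hγ.derivWithin hU (by simp)
  have hT : ∀ s ∈ I, HasDerivWithinAt γ (T s) I s := fun s hs => (hγd s hs).hasDerivWithinAt
  set N := fun s => rotL (T s) with hNdef
  have hNc : ContDiffOn ℝ (⊤ : ℕ∞) N I := rotL.contDiff.comp_contDiffOn hTc
  have hNnorm : ∀ s ∈ I, ‖N s‖ = 1 := fun s hs => by
    rw [hNdef]; rw [norm_rotL]; exact hunit s hs
  have hTd : DifferentiableOn ℝ T I := hTc.differentiableOn (by simp)
  have hT' : ∀ s ∈ I, HasDerivWithinAt T (k s • N s) I s := fun s hs => by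
    have h1 := (hTd s hs).hasDerivWithinAt
    rwa [show derivWithin T I s = k s • N s from by rw [hcurv s hs]; rfl] at h1
  have hN' : ∀ s ∈ I, HasDerivWithinAt N (-(k s) • T s) I s := fun s hs => by
    have h1 := (rotL.hasFDerivAt (x := T s)).comp_hasDerivWithinAt s (hT' s hs)
    have h2 : rotL (k s • N s) = -(k s) • T s := by
      rw [map_smul, hNdef, rotL_rotL, smul_neg, neg_smul]
    rw [h2] at h1
    exact h1
  -- smoothness of k
  have hkc : ContDiffOn ℝ (⊤ : ℕ∞) k I := by
    have h2 : ContDiffOn ℝ (⊤ : ℕ∞) (derivWithin T I) I := hTc.derivWithin hU (by simp)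
    have h3 : ContDiffOn ℝ (⊤ : ℕ∞) (fun s => ⟪derivWithin T I s, N s⟫) I := h2.inner ℝ hNc
    refine h3.congr fun s hs => ?_
    rw [hcurv s hs, show rotCCW (T s) = N s from rfl, real_inner_smul_left,
      real_inner_self_eq_norm_sq, hNnorm s hs]
    ring
  have hk0 : ∀ s ∈ I, k s ≠ 0 := fun s hs => (hpos s hs).ne'
  set r := fun s => (k s)⁻¹ with hrdef
  have hrc : ContDiffOn ℝ (⊤ : ℕ∞) r I := hkc.inv hk0
  have hrd : DifferentiableOn ℝ r I := hrc.differentiableOn (by simp)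
  set m := derivWithin r I with hmdef
  have hr' : ∀ s ∈ I, HasDerivWithinAt r (m s) I s := fun s hs => (hrd s hs).hasDerivWithinAt
  have hmc : ContinuousOn m I :=
    ContDiffOn.continuousOn (n := ((⊤ : ℕ∞) : WithTop ℕ∞)) (hrc.derivWithin hU (by simp))
  set c := fun s => γ s + r s • N s with hcdef
  have hcc : ContinuousOn c I :=
    hγ.continuousOn.add (hrc.continuousOn.smul hNc.continuousOn)
  have hc' : ∀ s ∈ I, HasDerivWithinAt c (m s • N s) I s := fun s hs => by
    have h1 := (hT s hs).add ((hr' s hs).smul (hN' s hs))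
    have h2 : r s • (-(k s) • T s) = -T s := by
      rw [smul_smul, show r s * -(k s) = -1 from by
        show (k s)⁻¹ * -(k s) = -1
        rw [mul_neg, inv_mul_cancel₀ (hk0 s hs)], neg_one_smul]
    rw [h2] at h1
    rw [add_neg_cancel_left] at h1
    exact h1
  -- monotonicity data
  obtain ⟨ε, hε, hrmono⟩ : ∃ ε : ℝ, (ε = 1 ∨ ε = -1) ∧
      ∀ x ∈ I, ∀ y ∈ I, x < y → ε * r y < ε * r x := by
    rcases hmono with hm | hm
    · refine ⟨1, Or.inl rfl, fun x hx y hy hxy => ?_⟩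
      simp only [one_mul]
      exact inv_strictAnti₀ (hpos x hx) (hm hx hy hxy)
    · refine ⟨-1, Or.inr rfl, fun x hx y hy hxy => ?_⟩
      have h1 : k y < k x := hm hx hy hxy
      have h2 : (k x)⁻¹ < (k y)⁻¹ := inv_strictAnti₀ (hpos y hy) h1
      show -1 * (k y)⁻¹ < -1 * (k x)⁻¹
      linarith
  have hε1 : |ε| = 1 := by rcases hε with h | h <;> simp [h]
  have hε0 : ε ≠ 0 := by rcases hε with h | h <;> simp [h]
  -- sign of m on Icc a b
  have hsign : ∀ s ∈ Icc a b, ε * m s ≤ 0 := by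
    intro s hs
    have hs' : s ∈ I := hIcc hs
    have hd : HasDerivWithinAt r (m s) (Icc a b) s := (hr' s hs').mono hIcc
    rw [hasDerivWithinAt_iff_tendsto_slope] at hd
    have hslope : ∀ t ∈ Icc a b \ {s}, ε * slope r s t ≤ 0 := by
      intro t ht
      have ht' : t ∈ I := hIcc ht.1
      have hts : t ≠ s := ht.2
      rw [slope_def_field, mul_div_assoc']
      rcases hts.lt_or_gt with h | h
      · have h1 : ε * r s < ε * r t := hrmono t ht' s hs' h
        apply div_nonpos_of_nonneg_of_nonpos <;> [nlinarith; linarith]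
      · have h1 : ε * r t < ε * r s := hrmono s hs' t ht' h
        apply div_nonpos_of_nonpos_of_nonneg <;> [nlinarith; linarith]
    have hnb : (𝓝[Icc a b \ {s}] s).NeBot := by
      rcases lt_or_eq_of_le hs.2 with hsb | hsb
      · have h1 : Ioo s b ⊆ Icc a b \ {s} := fun t ht =>
          ⟨⟨le_trans hs.1 ht.1.le, ht.2.le⟩, fun h => absurd (h ▸ ht.1) (lt_irrefl _)⟩
        exact (left_nhdsWithin_Ioo_neBot hsb).mono (nhdsWithin_mono _ h1)
      · have h1 : Ioo a b ⊆ Icc a b \ {s} := fun t ht =>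
          ⟨⟨ht.1.le, ht.2.le⟩, fun h => absurd (h ▸ hsb ▸ ht.2) (lt_irrefl _)⟩
        have h2 := right_nhdsWithin_Ioo_neBot hab
        rw [← hsb] at h2
        exact h2.mono (nhdsWithin_mono _ (hsb ▸ h1))
    exact le_of_tendsto (hd.const_mul ε)
      ((eventually_mem_nhdsWithin).mono fun t ht => hslope t ht)
  -- FTC
  have hIN : ∀ x ∈ Ioo a b, I ∈ 𝓝 x := fun x hx =>
    Filter.mem_of_superset (isOpen_Ioo.mem_nhds hx)
      (subset_trans Ioo_subset_Icc_self hIcc)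
  have hmint : IntervalIntegrable (fun s => m s • N s) MeasureTheory.volume a b := by
    apply ContinuousOn.intervalIntegrable
    rw [uIcc_of_le hab.le]
    exact (hmc.smul hNc.continuousOn).mono hIcc
  have hmint' : IntervalIntegrable m MeasureTheory.volume a b := by
    apply ContinuousOn.intervalIntegrable
    rw [uIcc_of_le hab.le]
    exact hmc.mono hIcc
  have hftc_c : ∫ s in a..b, m s • N s = c b - c a :=
    integral_eq_sub_of_hasDeriv_right_of_le hab.le (hcc.mono hIcc)
      (fun x hx => (((hc' x (hIcc (Ioo_subset_Icc_self hx))).hasDerivAt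
        (hIN x hx)).hasDerivWithinAt)) hmint
  have hftc_r : ∫ s in a..b, m s = r b - r a :=
    integral_eq_sub_of_hasDeriv_right_of_le hab.le
      ((hrc.continuousOn).mono hIcc)
      (fun x hx => (((hr' x (hIcc (Ioo_subset_Icc_self hx))).hasDerivAt
        (hIN x hx)).hasDerivWithinAt)) hmint'
  -- basic facts about circles
  have hrba : ε * r b < ε * r a := hrmono a ha b hb hab
  have hrne : r b ≠ r a := fun h => by rw [h] at hrba; exact lt_irrefl _ hrba
  have habs : |r a - r b| = ε * (r a - r b) := by
    rw [← abs_of_pos (by linarith : (0:ℝ) < ε * (r a - r b)), abs_mul, hε1, one_mul]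
  have hcγ : ∀ s ∈ I, γ s - c s = -(r s • N s) := fun s hs => by
    show γ s - (γ s + r s • N s) = -(r s • N s); abel
  have hrad : ∀ s ∈ I, ‖γ s - c s‖ = r s := fun s hs => by
    rw [hcγ s hs, norm_neg, norm_smul, hNnorm s hs, mul_one, Real.norm_eq_abs,
      abs_of_pos (inv_pos.mpr (hpos s hs))]
  -- triangle inequality
  have h1 : |r a - r b| ≤ ‖c b - c a‖ := by
    have h2 : |‖γ b - c a‖ - ‖γ b - c b‖| ≤ ‖(γ b - c a) - (γ b - c b)‖ :=
      abs_norm_sub_norm_le _ _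
    have h3 : (γ b - c a) - (γ b - c b) = c b - c a := by abel
    rw [h3, hrad b hb] at h2
    rw [← hpq, hrad a ha] at h2
    exact h2
  have hcne : c b - c a ≠ 0 := by
    intro h
    rw [h, norm_zero] at h1
    have : 0 < |r a - r b| := abs_pos.mpr (sub_ne_zero.mpr (Ne.symm hrne))
    linarith
  -- the unit vector u
  set u := ‖c b - c a‖⁻¹ • (c b - c a) with hudef
  have hu : ‖u‖ = 1 := norm_smul_inv_norm hcne
  have h3 : ⟪u, c b - c a⟫ = ‖c b - c a‖ := by
    rw [hudef, real_inner_smul_left, real_inner_self_eq_norm_sq]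
    have h4 : ‖c b - c a‖ ≠ 0 := norm_ne_zero_iff.mpr hcne
    field_simp
  have h4 : ⟪u, c b - c a⟫ = ∫ s in a..b, m s * ⟪u, N s⟫ := by
    have h4' := ContinuousLinearMap.intervalIntegral_comp_comm (innerSL ℝ u) hmint
    rw [hftc_c] at h4'
    simp only [innerSL_apply_apply, real_inner_smul_right] at h4'
    exact h4'.symm
  -- integral of the sign-adjusted m
  have h5 : ∫ s in a..b, -(ε * m s) = |r a - r b| := by
    rw [habs]
    have : ∫ s in a..b, -(ε * m s) = -(ε * ∫ s in a..b, m s) := by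
      rw [← intervalIntegral.integral_const_mul, ← intervalIntegral.integral_neg]
    rw [this, hftc_r]
    ring
  -- the nonnegative function g
  set g := fun s => -(ε * m s) - m s * ⟪u, N s⟫ with hgdef
  have hgnn : ∀ s ∈ Icc a b, 0 ≤ g s := by
    intro s hs
    have hs' : s ∈ I := hIcc hs
    have h6 : |m s * ⟪u, N s⟫| ≤ |m s| := by
      rw [abs_mul]
      have := abs_real_inner_le_norm u (N s)
      rw [hu, hNnorm s hs', one_mul] at this
      nlinarith [abs_nonneg (m s)]
    have h7 : |m s| = -(ε * m s) := by
      have h7' := abs_of_nonpos (hsign s hs)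
      rw [abs_mul, hε1, one_mul] at h7'
      exact h7'
    have := neg_abs_le (m s * ⟪u, N s⟫)
    have := le_abs_self (m s * ⟪u, N s⟫)
    show 0 ≤ -(ε * m s) - m s * ⟪u, N s⟫
    linarith [h6, h7]
  have hgcont : ContinuousOn g (Icc a b) := by
    apply ContinuousOn.sub
    · exact ((continuousOn_const.mul hmc).neg).mono hIcc
    · exact ((hmc.mono hIcc).mul
        (ContinuousOn.inner continuousOn_const (hNc.continuousOn.mono hIcc)))
  have hgint : IntervalIntegrable g MeasureTheory.volume a b := by
    apply ContinuousOn.intervalIntegrable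
    rw [uIcc_of_le hab.le]
    exact hgcont
  have hgint0 : ∫ s in a..b, g s = 0 := by
    have hint1 : IntervalIntegrable (fun s => -(ε * m s)) MeasureTheory.volume a b :=
      (hmint'.const_mul ε).neg
    have hint2 : IntervalIntegrable (fun s => m s * ⟪u, N s⟫) MeasureTheory.volume a b := by
      apply ContinuousOn.intervalIntegrable
      rw [uIcc_of_le hab.le]
      exact (hmc.mono hIcc).mul
        (ContinuousOn.inner continuousOn_const (hNc.continuousOn.mono hIcc))
    have he : ∫ s in a..b, g s =
        (∫ s in a..b, -(ε * m s)) - ∫ s in a..b, m s * ⟪u, N s⟫ :=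
      intervalIntegral.integral_sub hint1 hint2
    have hle : 0 ≤ ∫ s in a..b, g s :=
      intervalIntegral.integral_nonneg hab.le hgnn
    rw [he, h5, ← h4, h3] at *
    linarith [hle, h1, he]
  have hgzero : ∀ s ∈ Icc a b, g s = 0 := by
    intro s hs
    by_contra hgs
    have hgpos : 0 < g s := (hgnn s hs).lt_of_ne (Ne.symm hgs)
    have := intervalIntegral.integral_pos hab hgcont
      (fun x hx => hgnn x (Ioc_subset_Icc_self hx)) ⟨s, hs, hgpos⟩
    rw [hgint0] at this
    exact lt_irrefl 0 this
  -- MVT point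
  obtain ⟨s₀, hs₀, hms₀⟩ := exists_hasDerivAt_eq_slope r m hab
    ((hrc.continuousOn).mono hIcc)
    (fun x hx => (hr' x (hIcc (Ioo_subset_Icc_self hx))).hasDerivAt (hIN x hx))
  have hs₀' : s₀ ∈ I := hIcc (Ioo_subset_Icc_self hs₀)
  have hm0 : m s₀ ≠ 0 := by
    rw [hms₀]
    exact div_ne_zero (sub_ne_zero.mpr hrne) (sub_ne_zero.mpr hab.ne')
  -- N is locally constant near s₀
  have hmct : ContinuousAt m s₀ := (hmc.continuousAt (hIN s₀ hs₀))
  have hNt : N =ᶠ[nhds s₀] fun _ => (-ε) • u := by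
    filter_upwards [hmct.eventually_ne hm0, Ioo_mem_nhds hs₀.1 hs₀.2] with t hmt ht
    have ht' : t ∈ Icc a b := Ioo_subset_Icc_self ht
    have htI : t ∈ I := hIcc ht'
    have h7 : -(ε * m t) - m t * ⟪u, N t⟫ = 0 := hgzero t ht'
    have h8 : ⟪u, N t⟫ = -ε := by
      have h9 : m t * ⟪u, N t⟫ = m t * (-ε) := by ring_nf; ring_nf at h7; linarith
      exact mul_left_cancel₀ hmt h9
    have h10 : ⟪(-ε) • u, N t⟫ = 1 := by
      rw [real_inner_smul_left, h8]
      rcases hε with h | h <;> (rw [h]; norm_num)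
    have h11 : ‖(-ε) • u‖ = 1 := by
      rw [norm_smul, hu, mul_one, Real.norm_eq_abs, abs_neg, hε1]
    exact ((inner_eq_one_iff_of_norm_eq_one h11 (hNnorm t htI)).mp h10).symm
  have hderiv0 : HasDerivAt N 0 s₀ :=
    (hasDerivAt_const s₀ ((-ε) • u)).congr_of_eventuallyEq hNt
  have hderiv1 : HasDerivAt N (-(k s₀) • T s₀) s₀ :=
    (hN' s₀ hs₀').hasDerivAt (hIN s₀ hs₀)
  have h12 : -(k s₀) • T s₀ = 0 := hderiv1.unique hderiv0
  have hT0 : T s₀ = 0 := by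
    rcases smul_eq_zero.mp h12 with h | h
    · exact absurd (neg_eq_zero.mp h) (hk0 s₀ hs₀')
    · exact h
  have := hunit s₀ hs₀'
  rw [hT0, norm_zero] at this
  exact zero_ne_one this

/-- A smooth unit-speed plane curve whose signed curvature is positive and strictly
monotone is simple (injective on its interval of definition). -/
theorem simple_of_positive_strictly_monotone_curvature
    (I : Set ℝ) (hI : I.OrdConnected)
    (γ : ℝ → EuclideanSpace ℝ (Fin 2)) (k : ℝ → ℝ)
    (hγ : ContDiffOn ℝ (⊤ : ℕ∞) γ I)
    (hunit : ∀ s ∈ I, ‖derivWithin γ I s‖ = 1)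
    (hcurv : ∀ s ∈ I,
      derivWithin (derivWithin γ I) I s = k s • rotCCW (derivWithin γ I s))
    (hpos : ∀ s ∈ I, 0 < k s)
    (hmono : StrictMonoOn k I ∨ StrictAntiOn k I) :
    Set.InjOn γ I := by
  intro a ha b hb heq
  by_contra hne
  rcases Ne.lt_or_gt hne with h | h
  · exact key_lemma I hI γ k hγ hunit hcurv hpos hmono ha hb h heq
  · exact key_lemma I hI γ k hγ hunit hcurv hpos hmono hb ha h heq.symm
end
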